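/- Large arc gives the optimum (5 agents): for a 5-agent instance, if P i = d (i + 2) ≥ 1/2 for some agent i, then x i is an optimal location: for every point a of the circle, C i = ∑ j, dist(x j, x i) ≤ ∑ j, dist(x j, a). -/
import Mathlib

open Finset

/-- Position of agent `i` on the unit circle: the image of the partial sum
`∑_{j < i} d j`, so that `d i` is the clockwise arc from agent `i` to agent `i+1`. -/
noncomputable def pos (d : Fin 5 → ℝ) (i : Fin 5) : AddCircle (1 : ℝ) :=
  ((∑ j ∈ Finset.Iio i, d j : ℝ) : AddCircle (1 : ℝ))

/-- Social cost of placing the facility at `a`. -/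
noncomputable def SC (d : Fin 5 → ℝ) (a : AddCircle (1 : ℝ)) : ℝ :=
  ∑ i : Fin 5, dist (pos d i) a

/-- Social cost of placing the facility at agent `i`'s location. -/
noncomputable def C (d : Fin 5 → ℝ) (i : Fin 5) : ℝ := SC d (pos d i)

/-- The optimal social cost. -/
noncomputable def OPT (d : Fin 5 → ℝ) : ℝ := ⨅ a : AddCircle (1 : ℝ), SC d a

/-- The length of the arc facing agent `i` (indices mod 5). -/
noncomputable def P (d : Fin 5 → ℝ) (i : Fin 5) : ℝ := d (i + 2)

/-- Expected social cost of the PCD mechanism. -/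
noncomputable def PCD (d : Fin 5 → ℝ) : ℝ := ∑ i : Fin 5, P d i * C d i

lemma norm_coe_eq' (x : ℝ) : ‖(↑x : AddCircle (1:ℝ))‖ = |x - round x| :=
  UnitAddCircle.norm_eq

lemma dist_coe_le' (s t : ℝ) (m : ℤ) : dist (↑s : AddCircle (1:ℝ)) ↑t ≤ |s - t - m| := by
  rw [dist_eq_norm, ← AddCircle.coe_sub, norm_coe_eq']
  set x := s - t
  rcases eq_or_ne m (round x) with rfl | hne
  · simp
  · have h1 : |x - round x| ≤ 1/2 := abs_sub_round _
    have h2 : (1:ℝ) ≤ |(round x : ℝ) - m| := by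
      have : round x - m ≠ 0 := sub_ne_zero.mpr (fun h => hne h.symm)
      calc (1:ℝ) ≤ |(round x - m : ℤ)| := by exact_mod_cast Int.one_le_abs this
        _ = |(round x : ℝ) - m| := by push_cast; ring_nf
    have h3 : |(x - (m:ℝ)) - (x - round x)| ≤ |x - m| + |x - round x| := abs_sub _ _
    have h4 : |(x - m) - (x - round x)| = |(round x:ℝ) - m| := by ring_nf
    linarith

/-- Upper bound on the circle distance by any congruent nonnegative value. -/
lemma dist_le_of_rep (s t c : ℝ) (m : ℤ) (h : s - t = c + m ∨ t - s = c + m) (hc : 0 ≤ c) :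
    dist (↑s : AddCircle (1:ℝ)) ↑t ≤ c := by
  rcases h with h | h
  · have := dist_coe_le' s t m
    rwa [show s - t - m = c by linarith, abs_of_nonneg hc] at this
  · have := dist_coe_le' t s m
    rw [show t - s - m = c by linarith, abs_of_nonneg hc] at this
    rwa [dist_comm]

/-- Lower bound on the circle distance. -/
lemma le_dist_of_rep (s t c : ℝ) (m : ℤ) (h : s - t = c + m ∨ t - s = c + m)
    (hc0 : 0 ≤ c) (hc : c ≤ 1/2) : c ≤ dist (↑s : AddCircle (1:ℝ)) ↑t := by
  wlog hst : s - t = c + m generalizing s t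
  · rw [dist_comm]; exact this t s (h.symm.imp id id) (by tauto)
  rw [dist_eq_norm, ← AddCircle.coe_sub, norm_coe_eq', hst]
  set k : ℤ := round (c + (m:ℝ)) - m with hk
  have hkk : c + (m:ℝ) - round (c + (m:ℝ)) = c - k := by push_cast [hk]; ring
  rw [hkk]
  rcases le_or_gt (k:ℝ) 0 with h0 | h0
  · calc c ≤ c - k := by linarith
      _ ≤ |c - k| := le_abs_self _
  · have : (1:ℤ) ≤ k := by exact_mod_cast h0
    have : (1:ℝ) ≤ (k:ℝ) := by exact_mod_cast this
    calc c ≤ (k:ℝ) - c := by linarith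
      _ ≤ |c - k| := by rw [abs_sub_comm]; exact le_abs_self _

/-- Master lemma: five points on the circle with consecutive (mod 1) gaps
`g0, …, g4`, with `g2 ≥ 1/2`. Then the point `r0` is optimal. -/
lemma master (g0 g1 g2 g3 g4 r0 r1 r2 r3 r4 t : ℝ)
    (h0 : 0 ≤ g0) (h1 : 0 ≤ g1) (h3 : 0 ≤ g3) (h4 : 0 ≤ g4)
    (hsum : g0 + g1 + g2 + g3 + g4 = 1) (hbig : 1/2 ≤ g2)
    (e1 : ∃ m : ℤ, r1 - r0 = g0 + m) (e2 : ∃ m : ℤ, r2 - r1 = g1 + m)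
    (e3 : ∃ m : ℤ, r3 - r2 = g2 + m) (e4 : ∃ m : ℤ, r4 - r3 = g3 + m)
    (e5 : ∃ m : ℤ, r0 - r4 = g4 + m) :
    dist (↑r0 : AddCircle (1:ℝ)) ↑r0 + dist (↑r1 : AddCircle (1:ℝ)) ↑r0 +
      dist (↑r2 : AddCircle (1:ℝ)) ↑r0 + dist (↑r3 : AddCircle (1:ℝ)) ↑r0 +
      dist (↑r4 : AddCircle (1:ℝ)) ↑r0 ≤
    dist (↑r0 : AddCircle (1:ℝ)) ↑t + dist (↑r1 : AddCircle (1:ℝ)) ↑t +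
      dist (↑r2 : AddCircle (1:ℝ)) ↑t + dist (↑r3 : AddCircle (1:ℝ)) ↑t +
      dist (↑r4 : AddCircle (1:ℝ)) ↑t := by
    obtain ⟨m1, e1⟩ := e1; obtain ⟨m2, e2⟩ := e2; obtain ⟨m3, e3⟩ := e3
    obtain ⟨m4, e4⟩ := e4; obtain ⟨m5, e5⟩ := e5
    -- upper bounds on distances to r0
    have u1 : dist (↑r1 : AddCircle (1:ℝ)) ↑r0 ≤ g0 :=
      dist_le_of_rep _ _ _ m1 (Or.inl (by push_cast; linarith)) h0
    have u2 : dist (↑r2 : AddCircle (1:ℝ)) ↑r0 ≤ g0 + g1 :=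
      dist_le_of_rep _ _ _ (m1 + m2) (Or.inl (by push_cast; linarith)) (by linarith)
    have u3 : dist (↑r3 : AddCircle (1:ℝ)) ↑r0 ≤ g3 + g4 :=
      dist_le_of_rep _ _ _ (-1 - m1 - m2 - m3) (Or.inr (by push_cast; linarith)) (by linarith)
    have u4 : dist (↑r4 : AddCircle (1:ℝ)) ↑r0 ≤ g4 :=
      dist_le_of_rep _ _ _ m5 (Or.inr (by push_cast; linarith)) h4
    have u0 : dist (↑r0 : AddCircle (1:ℝ)) ↑r0 = 0 := dist_self _
    -- lower bounds
    have l23 : g0 + g1 + g3 + g4 ≤ dist (↑r2 : AddCircle (1:ℝ)) ↑r3 :=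
      le_dist_of_rep _ _ _ (-1 - m3) (Or.inl (by push_cast; linarith))
        (by linarith) (by linarith)
    have l41 : g4 + g0 ≤ dist (↑r4 : AddCircle (1:ℝ)) ↑r1 :=
      le_dist_of_rep _ _ _ (-1 - m2 - m3 - m4) (Or.inr (by push_cast; linarith))
        (by linarith) (by linarith)
    -- triangle inequalities through t
    have t23 : dist (↑r2 : AddCircle (1:ℝ)) ↑r3 ≤
        dist (↑r2 : AddCircle (1:ℝ)) ↑t + dist (↑r3 : AddCircle (1:ℝ)) ↑t := by
      have := dist_triangle (↑r2 : AddCircle (1:ℝ)) ↑t ↑r3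
      rwa [dist_comm (↑t : AddCircle (1:ℝ)) ↑r3] at this
    have t41 : dist (↑r4 : AddCircle (1:ℝ)) ↑r1 ≤
        dist (↑r4 : AddCircle (1:ℝ)) ↑t + dist (↑r1 : AddCircle (1:ℝ)) ↑t := by
      have := dist_triangle (↑r4 : AddCircle (1:ℝ)) ↑t ↑r1
      rwa [dist_comm (↑t : AddCircle (1:ℝ)) ↑r1] at this
    have n0 : (0:ℝ) ≤ dist (↑r0 : AddCircle (1:ℝ)) ↑t := dist_nonneg
    linarith

lemma pos0 (d : Fin 5 → ℝ) : pos d 0 = ((0:ℝ) : AddCircle (1:ℝ)) := by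
  rw [pos, show (Finset.Iio (0:Fin 5)) = ∅ from rfl, Finset.sum_empty]

lemma pos1 (d : Fin 5 → ℝ) : pos d 1 = ((d 0 : ℝ) : AddCircle (1:ℝ)) := by
  rw [pos, show (Finset.Iio (1:Fin 5)) = {0} from rfl, Finset.sum_singleton]

lemma pos2 (d : Fin 5 → ℝ) : pos d 2 = ((d 0 + d 1 : ℝ) : AddCircle (1:ℝ)) := by
  have : (∑ j ∈ Finset.Iio (2:Fin 5), d j) = d 0 + d 1 := by
    rw [show (Finset.Iio (2:Fin 5)) = {0,1} from rfl,
      Finset.sum_insert (by decide), Finset.sum_singleton]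
  rw [pos, this]

lemma pos3 (d : Fin 5 → ℝ) : pos d 3 = ((d 0 + d 1 + d 2 : ℝ) : AddCircle (1:ℝ)) := by
  have : (∑ j ∈ Finset.Iio (3:Fin 5), d j) = d 0 + d 1 + d 2 := by
    rw [show (Finset.Iio (3:Fin 5)) = {0,1,2} from rfl, Finset.sum_insert (by decide),
      Finset.sum_insert (by decide), Finset.sum_singleton]
    ring
  rw [pos, this]

lemma pos4 (d : Fin 5 → ℝ) : pos d 4 = ((d 0 + d 1 + d 2 + d 3 : ℝ) : AddCircle (1:ℝ)) := by
  have : (∑ j ∈ Finset.Iio (4:Fin 5), d j) = d 0 + d 1 + d 2 + d 3 := by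
    rw [show (Finset.Iio (4:Fin 5)) = {0,1,2,3} from rfl, Finset.sum_insert (by decide),
      Finset.sum_insert (by decide), Finset.sum_insert (by decide), Finset.sum_singleton]
    ring
  rw [pos, this]

theorem large_arc_gives_opt (d : Fin 5 → ℝ) (hd : ∀ i, 0 ≤ d i)
    (hsum : ∑ i, d i = 1) (i : Fin 5) (hi : 1 / 2 ≤ P d i) :
    ∀ a : AddCircle (1 : ℝ), C d i ≤ SC d a := by
  intro a
  induction a using QuotientAddGroup.induction_on with
  | H t =>
  rw [Fin.sum_univ_five] at hsum
  have hd0 := hd 0; have hd1 := hd 1; have hd2 := hd 2; have hd3 := hd 3; have hd4 := hd 4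
  fin_cases i
  · have hi' : 1/2 ≤ d 2 := hi
    show C d 0 ≤ SC d ((t : ℝ) : AddCircle (1:ℝ))
    rw [C, SC, SC, Fin.sum_univ_five, Fin.sum_univ_five, pos0, pos1, pos2, pos3, pos4]
    have := master (d 0) (d 1) (d 2) (d 3) (d 4) 0 (d 0) (d 0 + d 1) (d 0 + d 1 + d 2)
      (d 0 + d 1 + d 2 + d 3) t hd0 hd1 hd3 hd4 (by linarith) hi'
      ⟨0, by push_cast; ring⟩ ⟨0, by push_cast; ring⟩ ⟨0, by push_cast; ring⟩
      ⟨0, by push_cast; ring⟩ ⟨-1, by push_cast; linarith⟩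
    linarith
  · have hi' : 1/2 ≤ d 3 := hi
    show C d 1 ≤ SC d ((t : ℝ) : AddCircle (1:ℝ))
    rw [C, SC, SC, Fin.sum_univ_five, Fin.sum_univ_five, pos0, pos1, pos2, pos3, pos4]
    have := master (d 1) (d 2) (d 3) (d 4) (d 0) (d 0) (d 0 + d 1) (d 0 + d 1 + d 2)
      (d 0 + d 1 + d 2 + d 3) 0 t hd1 hd2 hd4 hd0 (by linarith) hi'
      ⟨0, by push_cast; ring⟩ ⟨0, by push_cast; ring⟩ ⟨0, by push_cast; ring⟩
      ⟨-1, by push_cast; linarith⟩ ⟨0, by push_cast; ring⟩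
    linarith
  · have hi' : 1/2 ≤ d 4 := hi
    show C d 2 ≤ SC d ((t : ℝ) : AddCircle (1:ℝ))
    rw [C, SC, SC, Fin.sum_univ_five, Fin.sum_univ_five, pos0, pos1, pos2, pos3, pos4]
    have := master (d 2) (d 3) (d 4) (d 0) (d 1) (d 0 + d 1) (d 0 + d 1 + d 2)
      (d 0 + d 1 + d 2 + d 3) 0 (d 0) t hd2 hd3 hd0 hd1 (by linarith) hi'
      ⟨0, by push_cast; ring⟩ ⟨0, by push_cast; ring⟩ ⟨-1, by push_cast; linarith⟩
      ⟨0, by push_cast; ring⟩ ⟨0, by push_cast; ring⟩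
    linarith
  · have hi' : 1/2 ≤ d 0 := hi
    show C d 3 ≤ SC d ((t : ℝ) : AddCircle (1:ℝ))
    rw [C, SC, SC, Fin.sum_univ_five, Fin.sum_univ_five, pos0, pos1, pos2, pos3, pos4]
    have := master (d 3) (d 4) (d 0) (d 1) (d 2) (d 0 + d 1 + d 2)
      (d 0 + d 1 + d 2 + d 3) 0 (d 0) (d 0 + d 1) t hd3 hd4 hd1 hd2 (by linarith) hi'
      ⟨0, by push_cast; ring⟩ ⟨-1, by push_cast; linarith⟩ ⟨0, by push_cast; ring⟩
      ⟨0, by push_cast; ring⟩ ⟨0, by push_cast; ring⟩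
    linarith
  · have hi' : 1/2 ≤ d 1 := hi
    show C d 4 ≤ SC d ((t : ℝ) : AddCircle (1:ℝ))
    rw [C, SC, SC, Fin.sum_univ_five, Fin.sum_univ_five, pos0, pos1, pos2, pos3, pos4]
    have := master (d 4) (d 0) (d 1) (d 2) (d 3) (d 0 + d 1 + d 2 + d 3) 0 (d 0)
      (d 0 + d 1) (d 0 + d 1 + d 2) t hd4 hd0 hd2 hd3 (by linarith) hi'
      ⟨-1, by push_cast; linarith⟩ ⟨0, by push_cast; ring⟩ ⟨0, by push_cast; ring⟩
      ⟨0, by push_cast; ring⟩ ⟨0, by push_cast; ring⟩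
    linarith
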